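/- Let x ≥ 1/(q_G − 1) = q_G. Then q_s(x) = 1/x + 1. -/

import Mathlib

open Filter Topology

noncomputable section

/-- The value `Σ_{i≥0} d i / q^(i+1)` of a (0-indexed) digit sequence `d` in base `q`;
this corresponds to `((d_i)_{i≥1})_q` with `d_i = d (i-1)`. -/
def seqVal (q : ℝ) (d : ℕ → ℕ) : ℝ := ∑' i : ℕ, (d i : ℝ) / q ^ (i + 1)

/-- `d` is a `q`-expansion of `x` with digits in `{0,1}`. -/
def IsExpansion (q x : ℝ) (d : ℕ → ℕ) : Prop :=
  (∀ i, d i ≤ 1) ∧ x = seqVal q d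

/-- `x` has a unique `q`-expansion. -/
def HasUniqueExpansion (q x : ℝ) : Prop := ∃! d : ℕ → ℕ, IsExpansion q x d

/-- The set `U(x)` of univoque bases of `x`. -/
def UBases (x : ℝ) : Set ℝ := {q | 1 < q ∧ q < 2 ∧ HasUniqueExpansion q x}

/-- `q_s(x) = inf U(x)`. -/
def qs (x : ℝ) : ℝ := sInf (UBases x)

/-- The univoque set `U_q` of `x ∈ [0, 1/(q-1)]` with a unique `q`-expansion. -/
def Uset (q : ℝ) : Set ℝ :=
  {x | x ∈ Set.Icc 0 (1 / (q - 1)) ∧ HasUniqueExpansion q x}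

/-- The set `U_q'` of digit sequences which are the unique `q`-expansion of their value. -/
def USeq (q : ℝ) : Set (ℕ → ℕ) :=
  {d | (∀ i, d i ≤ 1) ∧ ∀ e : ℕ → ℕ, IsExpansion q (seqVal q d) e → e = d}

/-- The Thue–Morse sequence: `τ 0 = 0`, `τ (2n) = τ n`, `τ (2n+1) = 1 - τ n`. -/
def IsThueMorse (τ : ℕ → ℕ) : Prop :=
  τ 0 = 0 ∧ (∀ n, τ (2 * n) = τ n) ∧ ∀ n, τ (2 * n + 1) = 1 - τ n

/-- `q` is the Komornik–Loreti constant: the base in `(1,2)` with `1 = Σ_{i≥1} τ_i q^{-i}`. -/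
def IsKL (τ : ℕ → ℕ) (q : ℝ) : Prop :=
  1 < q ∧ q < 2 ∧ (1 : ℝ) = ∑' i : ℕ, (τ (i + 1) : ℝ) / q ^ (i + 1)

/-- `Q` is the sequence of bases `q_n`: `Q 0 = 1` and for `n ≥ 1`, `Q n` is the root in
`(1,2)` of `1 = Σ_{i=1}^{2^n} τ_i q^{-i}`. -/
def IsBaseSeq (τ : ℕ → ℕ) (Q : ℕ → ℝ) : Prop :=
  Q 0 = 1 ∧ ∀ n, 1 ≤ n → 1 < Q n ∧ Q n < 2 ∧
    (1 : ℝ) = ∑ i ∈ Finset.range (2 ^ n), (τ (i + 1) : ℝ) / (Q n) ^ (i + 1)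

/-- `D_n = ⋃_{q ∈ (q_{n-1}, q_n]} U_q`. -/
def D (Q : ℕ → ℝ) (n : ℕ) : Set ℝ := ⋃ q ∈ Set.Ioc (Q (n - 1)) (Q n), Uset q

/-- The golden ratio. -/
def qG : ℝ := (1 + Real.sqrt 5) / 2

/-- Strict lexicographical order on digit sequences. -/
def seqLt (c d : ℕ → ℕ) : Prop := ∃ n, (∀ i, i < n → c i = d i) ∧ c n < d n

/-- The word `τ_1 ⋯ τ_m`. -/
def tmPrefix (τ : ℕ → ℕ) (m : ℕ) : List ℕ := (List.range m).map fun i => τ (i + 1)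

/-- `w⁻`: decrease the last digit of a word by 1. -/
def lastDec (w : List ℕ) : List ℕ := w.dropLast ++ [w.getLastD 0 - 1]

/-- `w⁺`: increase the last digit of a word by 1. -/
def lastInc (w : List ℕ) : List ℕ := w.dropLast ++ [w.getLastD 0 + 1]

/-- The reflection of a word. -/
def reflect (w : List ℕ) : List ℕ := w.map fun d => 1 - d

/-- The infinite sequence given by the prefix `p` followed by periodic repetition of `w`. -/
def prefPeriodic (p w : List ℕ) : ℕ → ℕ := fun j =>
  if j < p.length then p.getD j 0 else w.getD ((j - p.length) % w.length) 0

/-- `z_n = ((τ_1⋯τ_{2^{n-1}})(τ_{2^{n-1}+1}⋯τ_{2^n})^∞)_{q_n}`. -/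
def zVal (τ : ℕ → ℕ) (Q : ℕ → ℝ) (n : ℕ) : ℝ :=
  seqVal (Q n) (prefPeriodic (tmPrefix τ (2 ^ (n - 1)))
    ((List.range (2 ^ (n - 1))).map fun i => τ (2 ^ (n - 1) + (i + 1))))

/-- `z_{1,k} = Σ_{i=1}^k q_G^{-i} + 1/(q_G^k (q_G^2 - 1))`. -/
def z1 (k : ℕ) : ℝ :=
  (∑ i ∈ Finset.range k, 1 / qG ^ (i + 1)) + 1 / (qG ^ k * (qG ^ 2 - 1))


/-! For `q > 1/x + 1` we have `x > 1/(q-1)`, so `x` has no `q`-expansion at all, and for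
`q = 1/x + 1` the number `x = 1/(q-1)` has the unique expansion `1^∞`. For `q < 1/x + 1 ≤ q_G`
uniqueness fails because `q² ≤ q + 1`: if `d` is the unique expansion of `x`, no scaled tail
`t_n = q · ((d_n d_{n+1} ⋯))_q` lies in the switch region `[1, 1/(q-1)]`, where either digit can
start an expansion of the tail. A tail `t_n < 1` forces `d_n = 0` and `t_{n+1} = q t_n < q ≤ 1/(q-1)`,
so `t_{n+1} < 1` again; symmetrically `t_n > 1/(q-1)` propagates. Hence `d` is `0^∞` or `1^∞`,
and `x` is `0` or `1/(q-1)`. -/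

open Finset

section Series

variable {q : ℝ} {d : ℕ → ℕ}

lemma hasSum_one_div_pow_succ (hq : 1 < q) :
    HasSum (fun i : ℕ => 1 / q ^ (i + 1)) (1 / (q - 1)) := by
  have hgeom := (hasSum_geometric_of_lt_one (r := q⁻¹) (by positivity)
    (inv_lt_one_of_one_lt₀ hq)).mul_left q⁻¹
  have hq1 : q - 1 ≠ 0 := by linarith
  have hterm : (fun i : ℕ => 1 / q ^ (i + 1)) = fun i => q⁻¹ * q⁻¹ ^ i := by
    ext i; rw [pow_succ, inv_pow, one_div, mul_inv, mul_comm]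
  rwa [hterm, show 1 / (q - 1) = q⁻¹ * (1 - q⁻¹)⁻¹ by field_simp]

lemma summable_digit_div_pow (hq : 1 < q) (hd : ∀ i, d i ≤ 1) :
    Summable fun i : ℕ => (d i : ℝ) / q ^ (i + 1) :=
  (hasSum_one_div_pow_succ hq).summable.of_nonneg_of_le (fun i => by positivity)
    fun i => div_le_div_of_nonneg_right (by exact_mod_cast hd i) (by positivity)

lemma seqVal_nonneg (hq : 0 ≤ q) (d : ℕ → ℕ) : 0 ≤ seqVal q d :=
  tsum_nonneg fun i => by positivity

lemma seqVal_le (hq : 1 < q) (hd : ∀ i, d i ≤ 1) : seqVal q d ≤ 1 / (q - 1) :=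
  hasSum_le (fun i => div_le_div_of_nonneg_right (by exact_mod_cast hd i) (by positivity))
    (summable_digit_div_pow hq hd).hasSum (hasSum_one_div_pow_succ hq)

lemma seqVal_const_one (hq : 1 < q) : seqVal q (fun _ => 1) = 1 / (q - 1) := by
  simpa [seqVal] using (hasSum_one_div_pow_succ hq).tsum_eq

lemma hasUniqueExpansion_one_div_sub_one (hq : 1 < q) :
    HasUniqueExpansion q (1 / (q - 1)) := by
  refine ⟨fun _ => 1, ⟨fun _ => le_rfl, (seqVal_const_one hq).symm⟩,
    fun e ⟨he, hval⟩ => funext fun n => ?_⟩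
  by_contra hne
  have hen : e n = 0 := by have := he n; omega
  -- the missing digit `1` at `n` leaves a gap of `1 / q ^ (n + 1)` below `1 / (q - 1)`
  have hgap := le_hasSum ((hasSum_one_div_pow_succ hq).sub (summable_digit_div_pow hq he).hasSum) n
    fun j _ => sub_nonneg.2 (div_le_div_of_nonneg_right (by exact_mod_cast he j) (by positivity))
  rw [hen, ← seqVal, ← hval, Nat.cast_zero, zero_div, sub_zero, sub_self] at hgap
  exact (one_div_pos.2 (pow_pos (zero_lt_one.trans hq) (n + 1))).not_ge hgap

end Series

section Tail

variable {q : ℝ} {d e : ℕ → ℕ}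

def tailVal (q : ℝ) (d : ℕ → ℕ) (n : ℕ) : ℝ := seqVal q fun i => d (i + n)

lemma seqVal_eq_sum_add_tailVal (hq : 1 < q) (hd : ∀ i, d i ≤ 1) (n : ℕ) :
    seqVal q d = ∑ i ∈ range n, (d i : ℝ) / q ^ (i + 1) + tailVal q d n / q ^ n := by
  rw [seqVal, ← (summable_digit_div_pow hq hd).sum_add_tsum_nat_add n, tailVal, seqVal, ← tsum_div_const]
  congr 1
  refine tsum_congr fun i => ?_
  rw [div_div, ← pow_add, add_right_comm]

lemma tailVal_succ (hq : 1 < q) (hd : ∀ i, d i ≤ 1) (n : ℕ) :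
    tailVal q d (n + 1) = q * tailVal q d n - d n := by
  have h := seqVal_eq_sum_add_tailVal hq (d := fun i => d (i + n)) (fun i => hd _) 1
  simp only [tailVal, range_one, sum_singleton, zero_add, pow_one] at h ⊢
  simp only [add_assoc, add_comm 1 n] at h
  rw [h]
  field_simp
  ring

lemma seqVal_eq_of_tailVal_eq (hq : 1 < q) (hd : ∀ i, d i ≤ 1) (he : ∀ i, e i ≤ 1) {n : ℕ}
    (hlt : ∀ i < n, e i = d i) (htail : tailVal q e n = tailVal q d n) :
    seqVal q e = seqVal q d := by
  rw [seqVal_eq_sum_add_tailVal hq he n, seqVal_eq_sum_add_tailVal hq hd n, htail,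
    sum_congr rfl fun i hi => by rw [hlt i (mem_range.1 hi)]]

end Tail

section Greedy

variable {q y : ℝ}

def greedyDigit (q r : ℝ) : ℕ := if 1 ≤ q * r then 1 else 0

def greedyRem (q y : ℝ) : ℕ → ℝ
  | 0 => y
  | n + 1 => q * greedyRem q y n - greedyDigit q (greedyRem q y n)

lemma greedyDigit_le_one (q r : ℝ) : greedyDigit q r ≤ 1 := by
  unfold greedyDigit; split <;> omega

lemma greedyRem_mem (hq1 : 1 < q) (hq2 : q ≤ 2) (hy : y ∈ Set.Icc 0 (1 / (q - 1))) :
    ∀ n, greedyRem q y n ∈ Set.Icc 0 (1 / (q - 1))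
  | 0 => hy
  | n + 1 => by
    obtain ⟨h0, h1⟩ := greedyRem_mem hq1 hq2 hy n
    have hq0 : 0 < q - 1 := by linarith
    have hqr : q * greedyRem q y n ≤ 1 / (q - 1) + 1 := by
      calc q * greedyRem q y n ≤ q * (1 / (q - 1)) := by gcongr
        _ = 1 / (q - 1) + 1 := by field_simp; ring
    have hone : 1 ≤ 1 / (q - 1) := by rw [le_div_iff₀ hq0]; linarith
    simp only [greedyRem, greedyDigit]
    split_ifs with h
    · constructor <;> push_cast <;> linarith
    · constructor <;> push_cast <;> nlinarith

lemma sum_greedyDigit_add_greedyRem (hq : q ≠ 0) (y : ℝ) (n : ℕ) :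
    ∑ i ∈ range n, (greedyDigit q (greedyRem q y i) : ℝ) / q ^ (i + 1) + greedyRem q y n / q ^ n
      = y := by
  induction n with
  | zero => simp [greedyRem]
  | succ n ih =>
    set r := greedyRem q y n
    have hstep : (greedyDigit q r : ℝ) / q ^ (n + 1) + (q * r - greedyDigit q r) / q ^ (n + 1)
        = r / q ^ n := by
      field_simp; ring
    rw [sum_range_succ, greedyRem, add_assoc, hstep, ih]

lemma exists_isExpansion (hq1 : 1 < q) (hq2 : q ≤ 2) (hy : y ∈ Set.Icc 0 (1 / (q - 1))) :
    ∃ d, IsExpansion q y d := by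
  set d := fun i => greedyDigit q (greedyRem q y i)
  have hq0 : 0 < q := by linarith
  have hrem : Tendsto (fun n => greedyRem q y n / q ^ n) atTop (𝓝 0) := by
    have hgeom := (tendsto_pow_atTop_nhds_zero_of_lt_one (by positivity)
      (inv_lt_one_of_one_lt₀ hq1)).const_mul (1 / (q - 1))
    rw [mul_zero] at hgeom
    refine squeeze_zero (fun n => div_nonneg (greedyRem_mem hq1 hq2 hy n).1 (by positivity))
      (fun n => ?_) hgeom
    rw [inv_pow, ← div_eq_mul_inv]
    gcongr
    exact (greedyRem_mem hq1 hq2 hy n).2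
  refine ⟨d, fun i => greedyDigit_le_one _ _, (HasSum.tsum_eq ?_).symm⟩
  rw [hasSum_iff_tendsto_nat_of_nonneg (fun i => by positivity)]
  have hsum : ∀ n, ∑ i ∈ range n, (d i : ℝ) / q ^ (i + 1) = y - greedyRem q y n / q ^ n :=
    fun n => eq_sub_of_add_eq (sum_greedyDigit_add_greedyRem hq0.ne' y n)
  simpa [hsum] using tendsto_const_nhds.sub hrem

end Greedy

section Switch

variable {q x : ℝ} {d : ℕ → ℕ}

lemma digit_eq_zero_of_mul_tailVal_lt_one (hq : 1 < q) (hd : ∀ i, d i ≤ 1) {n : ℕ}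
    (h : q * tailVal q d n < 1) : d n = 0 := by
  have hnext := tailVal_succ hq hd n
  have hnonneg := seqVal_nonneg (zero_le_one.trans hq.le) fun i => d (i + (n + 1))
  rw [← tailVal] at hnonneg
  have : (d n : ℝ) < 1 := by linarith
  have : d n < 1 := by exact_mod_cast this
  omega

lemma digit_eq_one_of_lt_mul_tailVal (hq : 1 < q) (hd : ∀ i, d i ≤ 1) {n : ℕ}
    (h : 1 / (q - 1) < q * tailVal q d n) : d n = 1 := by
  have hnext := tailVal_succ hq hd n
  have hle := seqVal_le hq fun i => hd (i + (n + 1))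
  rw [← tailVal] at hle
  have : (0 : ℝ) < d n := by linarith
  have : 0 < d n := by exact_mod_cast this
  have := hd n
  omega

lemma not_hasUniqueExpansion_of_mul_tailVal_mem (hq1 : 1 < q) (hq2 : q ≤ 2)
    (hd : IsExpansion q x d) {n : ℕ} (h : q * tailVal q d n ∈ Set.Icc 1 (1 / (q - 1))) :
    ¬ HasUniqueExpansion q x := by
  obtain ⟨hd, hx⟩ := hd
  set b := 1 - d n
  have hb : (b : ℝ) ≤ 1 := by exact_mod_cast Nat.sub_le 1 (d n)
  obtain ⟨c, hc, hcval⟩ := exists_isExpansion (y := q * tailVal q d n - b) hq1 hq2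
    ⟨by linarith [h.1], by linarith [h.2, Nat.cast_nonneg (α := ℝ) b]⟩
  set e : ℕ → ℕ := fun i => if i < n then d i else if i = n then b else c (i - (n + 1))
  have he : ∀ i, e i ≤ 1 := fun i => by
    simp only [e]; split_ifs
    exacts [hd i, Nat.sub_le 1 _, hc _]
  have hen : e n = b := by simp [e]
  have htail : tailVal q e n = tailVal q d n := by
    have hnext : tailVal q e (n + 1) = seqVal q c := by
      simp only [tailVal, e]
      congr 1; funext i
      rw [if_neg (by omega), if_neg (by omega), Nat.add_sub_cancel]
    have := tailVal_succ hq1 he n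
    rw [hnext, ← hcval, hen] at this
    have hq0 : q ≠ 0 := by positivity
    exact mul_left_cancel₀ hq0 (by linarith)
  have hval : seqVal q e = seqVal q d :=
    seqVal_eq_of_tailVal_eq hq1 hd he (fun i hi => by simp [e, hi]) htail
  rintro ⟨u, -, hu⟩
  have hed : e = d := (hu e ⟨he, hx.trans hval.symm⟩).trans (hu d ⟨hd, hx⟩).symm
  have := congrFun hed n
  omega

end Switch

theorem not_hasUniqueExpansion_of_sq_le_add_one {q x : ℝ} (hq : 1 < q) (hq' : q ^ 2 ≤ q + 1)
    (hx : x ∈ Set.Ioo 0 (1 / (q - 1))) : ¬ HasUniqueExpansion q x := by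
  rintro ⟨d, hd, hu⟩
  have hq2 : q ≤ 2 := by nlinarith
  have hq0 : 0 < q - 1 := by linarith
  have hsplit : ∀ n, q * tailVal q d n < 1 ∨ 1 / (q - 1) < q * tailVal q d n := fun n => by
    by_contra! h
    exact not_hasUniqueExpansion_of_mul_tailVal_mem hq hq2 hd h ⟨d, hd, hu⟩
  have hlow : ∀ n, q * tailVal q d n < 1 → q * tailVal q d (n + 1) < 1 := fun n hn => by
    refine (hsplit (n + 1)).resolve_right fun h => ?_
    rw [tailVal_succ hq hd.1, digit_eq_zero_of_mul_tailVal_lt_one hq hd.1 hn] at h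
    have : q ≤ 1 / (q - 1) := by rw [le_div_iff₀ hq0]; nlinarith
    nlinarith
  have hhigh : ∀ n, 1 / (q - 1) < q * tailVal q d n → 1 / (q - 1) < q * tailVal q d (n + 1) :=
    fun n hn => by
    refine (hsplit (n + 1)).resolve_left fun h => ?_
    rw [tailVal_succ hq hd.1, digit_eq_one_of_lt_mul_tailVal hq hd.1 hn] at h
    have : 1 ≤ q * (1 / (q - 1) - 1) := by
      rw [div_sub_one hq0.ne', mul_div_assoc', le_div_iff₀ hq0]; nlinarith
    push_cast at h
    nlinarith
  rcases hsplit 0 with h0 | h0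
  · have hzero : ∀ n, d n = 0 := fun n =>
      digit_eq_zero_of_mul_tailVal_lt_one hq hd.1 (Nat.rec h0 hlow n)
    have : x = 0 := by simp [hd.2, seqVal, hzero]
    exact hx.1.ne' this
  · have hone : d = fun _ => 1 := funext fun n =>
      digit_eq_one_of_lt_mul_tailVal hq hd.1 (Nat.rec h0 hhigh n)
    rw [hd.2, hone, seqVal_const_one hq] at hx
    exact hx.2.false

lemma sq_le_add_one_of_le_goldenRatio {q : ℝ} (hq : 1 ≤ q) (hqφ : q ≤ Real.goldenRatio) :
    q ^ 2 ≤ q + 1 := by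
  nlinarith [Real.goldenRatio_sq]

/-- For `x ≥ 1/(q_G - 1) = q_G`, `q_s(x) = 1/x + 1`. -/
theorem qs_eq_of_ge_golden (x : ℝ) (hx : qG ≤ x) :
    qs x = 1 / x + 1 := by
  change Real.goldenRatio ≤ x at hx
  have hx0 : 0 < x := Real.goldenRatio_pos.trans_le hx
  set q₀ := 1 / x + 1
  have hq₀x : 1 / (q₀ - 1) = x := by simp [q₀]
  have hq₀ : 1 < q₀ := by simp only [q₀]; linarith [one_div_pos.2 hx0]
  have hq₀φ : q₀ ≤ Real.goldenRatio := by
    have : 1 / x ≤ Real.goldenRatio⁻¹ := by rw [one_div]; gcongr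
    rw [Real.inv_goldenRatio, ← Real.one_sub_goldenConj] at this
    linarith
  suffices UBases x = {q₀} by rw [qs, this, csInf_singleton]
  refine Set.eq_singleton_iff_unique_mem.2 ⟨⟨hq₀, hq₀φ.trans_lt Real.goldenRatio_lt_two,
    hq₀x ▸ hasUniqueExpansion_one_div_sub_one hq₀⟩, fun q ⟨hq, _, hu⟩ => ?_⟩
  rcases lt_trichotomy q q₀ with hlt | rfl | hgt
  · refine absurd hu (not_hasUniqueExpansion_of_sq_le_add_one hq
      (sq_le_add_one_of_le_goldenRatio hq.le (hlt.le.trans hq₀φ)) ⟨hx0, ?_⟩)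
    rw [← hq₀x]; gcongr
  · rfl
  · obtain ⟨d, ⟨hd, rfl⟩, -⟩ := hu
    have : 1 / (q - 1) < 1 / (q₀ - 1) := by gcongr
    linarith [seqVal_le hq hd]
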